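/- Let K be a field and q ∈ K an element that is not a root of unity. Let M be the K-vector space with basis {v_n : n ∈ ℕ} ∪ {w_n : n ∈ ℕ}. Then there is a (unique) left module structure over the quantized Weyl algebra C(q) on M in which the generators a, b act K-linearly by: a·v_0 = 0, a·v_n = ((qⁿ−1)/(q−1))·v_{n−1} for n ≥ 1, b·v_n = v_{n+1} for all n ≥ 0, a·w_n = qⁿ(w_n + w_{n+1}), and b·w_n = (q^{−n}/(1−q))·w_n + (−1)ⁿ v_0 for all n ≥ 0. -/

import Mathlib

noncomputable section

open FreeAlgebra

/-- Defining relation of the quantized Weyl algebra `C(q)`: `a * b = q • (b * a) + 1`,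
where `ι K 0` plays the role of `a` and `ι K 1` plays the role of `b`. -/
inductive QuantizedWeylRel (K : Type) [Field K] (q : K) :
    FreeAlgebra K (Fin 2) → FreeAlgebra K (Fin 2) → Prop
  | rel : QuantizedWeylRel K q (ι K (0 : Fin 2) * ι K (1 : Fin 2))
      (q • (ι K (1 : Fin 2) * ι K (0 : Fin 2)) + 1)

/-- The quantized Weyl algebra `C(q)`. -/
abbrev QuantizedWeyl (K : Type) [Field K] (q : K) : Type :=
  RingQuot (QuantizedWeylRel K q)

/-- The generator `a` of the quantized Weyl algebra. -/
def QuantizedWeyl.a (K : Type) [Field K] (q : K) : QuantizedWeyl K q :=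
  RingQuot.mkAlgHom K (QuantizedWeylRel K q) (ι K (0 : Fin 2))

/-- The generator `b` of the quantized Weyl algebra. -/
def QuantizedWeyl.b (K : Type) [Field K] (q : K) : QuantizedWeyl K q :=
  RingQuot.mkAlgHom K (QuantizedWeylRel K q) (ι K (1 : Fin 2))

/-- The `K`-vector space with basis `{v_n : n ∈ ℕ} ∪ {w_n : n ∈ ℕ}`. -/
abbrev VWSpace (K : Type) [Field K] : Type := (ℕ ⊕ ℕ) →₀ K

/-- The basis vector `v_n`. -/
def VWSpace.v (K : Type) [Field K] (n : ℕ) : VWSpace K := Finsupp.single (Sum.inl n) 1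

/-- The basis vector `w_n`. -/
def VWSpace.w (K : Type) [Field K] (n : ℕ) : VWSpace K := Finsupp.single (Sum.inr n) 1


/-! `C(q)` is presented by two generators and one relation, so `C(q)`-module structures on `M`
are the pairs of `K`-linear operators `(A, B)` on `M` with `A B = q B A + 1`, and both operators
are fixed by their values on the basis. The relation holds on the basis: on `v_n` it is the
`q`-integer identity `[n+1]_q - q [n]_q = 1`. On `w_n`, the `v_0`-terms of `b·w_n` and `b·w_{n+1}`
cancel in `b a w_n` by their alternating signs, the `w_{n+1}`-terms cancel since
`q⁻ⁿ = q · q⁻⁽ⁿ⁺¹⁾`, and the `w_n`-coefficient is `qⁿ · q⁻ⁿ/(1 - q) · (1 - q) = 1`. -/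

namespace QuantizedWeyl

variable {K : Type} [Field K] {q : K} {A : Type*} [Semiring A] [Algebra K A]

def lift (x y : A) (h : x * y = q • (y * x) + 1) : QuantizedWeyl K q →ₐ[K] A :=
  RingQuot.liftAlgHom K ⟨FreeAlgebra.lift K ![x, y], fun {_ _} r => by cases r; simpa using h⟩

theorem lift_a (x y : A) (h : x * y = q • (y * x) + 1) : lift x y h (a K q) = x := by
  simp [lift, a]

theorem lift_b (x y : A) (h : x * y = q • (y * x) + 1) : lift x y h (b K q) = y := by
  simp [lift, b]

theorem algHom_ext {f g : QuantizedWeyl K q →ₐ[K] A} (ha : f (a K q) = g (a K q))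
    (hb : f (b K q) = g (b K q)) : f = g := by
  refine RingQuot.ringQuot_ext' K _ _ (FreeAlgebra.hom_ext (funext fun i => ?_))
  fin_cases i
  exacts [ha, hb]

end QuantizedWeyl

namespace VWSpace

variable {K : Type} [Field K] (q : K)

theorem end_ext {f g : Module.End K (VWSpace K)} (hv : ∀ n, f (v K n) = g (v K n))
    (hw : ∀ n, f (w K n) = g (w K n)) : f = g :=
  Finsupp.basisSingleOne.ext fun
    | .inl n => hv n
    | .inr n => hw n

def aImage : ℕ ⊕ ℕ → VWSpace K
  | .inl 0 => 0
  | .inl (n + 1) => ((q ^ (n + 1) - 1) / (q - 1)) • v K n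
  | .inr n => q ^ n • (w K n + w K (n + 1))

def bImage : ℕ ⊕ ℕ → VWSpace K
  | .inl n => v K (n + 1)
  | .inr n => ((q ^ n)⁻¹ / (1 - q)) • w K n + ((-1 : K) ^ n) • v K 0

def aOp : Module.End K (VWSpace K) := Finsupp.linearCombination K (aImage q)

def bOp : Module.End K (VWSpace K) := Finsupp.linearCombination K (bImage q)

@[simp]
theorem aOp_v_zero : aOp q (v K 0) = 0 := by
  simp [aOp, v, aImage]

@[simp]
theorem aOp_v_succ (n : ℕ) : aOp q (v K (n + 1)) = ((q ^ (n + 1) - 1) / (q - 1)) • v K n := by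
  simp [aOp, v, aImage]

@[simp]
theorem aOp_w (n : ℕ) : aOp q (w K n) = q ^ n • (w K n + w K (n + 1)) := by
  simp [aOp, w, aImage]

@[simp]
theorem bOp_v (n : ℕ) : bOp q (v K n) = v K (n + 1) := by
  simp [bOp, v, bImage]

@[simp]
theorem bOp_w (n : ℕ) :
    bOp q (w K n) = ((q ^ n)⁻¹ / (1 - q)) • w K n + ((-1 : K) ^ n) • v K 0 := by
  simp [bOp, w, bImage]

theorem aOp_mul_bOp (hq0 : q ≠ 0) (hq1 : q ≠ 1) :
    aOp q * bOp q = q • (bOp q * aOp q) + 1 := by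
  have hq1' : q - 1 ≠ 0 := sub_ne_zero.mpr hq1
  have h1q : 1 - q ≠ 0 := sub_ne_zero.mpr hq1.symm
  refine end_ext (fun n => ?_) (fun n => ?_)
  · rcases n with _ | n
    · simp [div_self hq1']
    · simp only [Module.End.mul_apply, LinearMap.add_apply, LinearMap.smul_apply,
        Module.End.one_apply, bOp_v, aOp_v_succ, map_smul, smul_smul]
      match_scalars
      field_simp
      ring
  · have hqn : q ^ n ≠ 0 := pow_ne_zero _ hq0
    simp only [Module.End.mul_apply, LinearMap.add_apply, LinearMap.smul_apply,
      Module.End.one_apply, bOp_w, aOp_w, aOp_v_zero, map_add, map_smul, smul_add, smul_zero,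
      smul_smul]
    match_scalars <;> field_simp <;> ring

end VWSpace

open VWSpace QuantizedWeyl

/-- For `q` not a root of unity, there is a unique left `C(q)`-module structure on the
`K`-vector space `M` with basis `{v_n} ∪ {w_n}` — i.e. a unique `K`-algebra
homomorphism `ρ : C(q) → End_K(M)` — in which the generators `a`, `b` act `K`-linearly
by `a·v_0 = 0`, `a·v_n = ((qⁿ-1)/(q-1))·v_{n-1}` for `n ≥ 1`, `b·v_n = v_{n+1}`,
`a·w_n = qⁿ(w_n + w_{n+1})` and `b·w_n = (q⁻ⁿ/(1-q))·w_n + (-1)ⁿ·v_0`. -/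
theorem quantizedWeyl_module_structure (K : Type) [Field K] (q : K) (hq0 : q ≠ 0)
    (hq : ∀ k : ℕ, 0 < k → q ^ k ≠ 1) :
    ∃! ρ : QuantizedWeyl K q →ₐ[K] Module.End K (VWSpace K),
      ρ (QuantizedWeyl.a K q) (VWSpace.v K 0) = 0 ∧
      (∀ n : ℕ, ρ (QuantizedWeyl.a K q) (VWSpace.v K (n + 1)) =
        ((q ^ (n + 1) - 1) / (q - 1)) • VWSpace.v K n) ∧
      (∀ n : ℕ, ρ (QuantizedWeyl.b K q) (VWSpace.v K n) = VWSpace.v K (n + 1)) ∧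
      (∀ n : ℕ, ρ (QuantizedWeyl.a K q) (VWSpace.w K n) =
        q ^ n • (VWSpace.w K n + VWSpace.w K (n + 1))) ∧
      (∀ n : ℕ, ρ (QuantizedWeyl.b K q) (VWSpace.w K n) =
        ((q ^ n)⁻¹ / (1 - q)) • VWSpace.w K n + ((-1 : K) ^ n) • VWSpace.v K 0) := by
  have hq1 : q ≠ 1 := by simpa using hq 1 one_pos
  refine ⟨lift _ _ (aOp_mul_bOp q hq0 hq1), ?_, ?_⟩
  · simp only [lift_a, lift_b]
    exact ⟨aOp_v_zero q, aOp_v_succ q, bOp_v q, aOp_w q, bOp_w q⟩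
  · rintro ρ ⟨hv0, hv, hbv, hw, hbw⟩
    refine algHom_ext ?_ ?_
    · rw [lift_a]
      refine end_ext (fun n => ?_) (fun n => by rw [hw, aOp_w])
      rcases n with _ | n
      · rw [hv0, aOp_v_zero]
      · rw [hv, aOp_v_succ]
    · rw [lift_b]
      exact end_ext (fun n => by rw [hbv, bOp_v]) (fun n => by rw [hbw, bOp_w])

end
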